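/- Let γ be a simple terminally weighted rooted tree with branch vertex v̄, let v be a direct descendant of v̄, and let γ̃ be the advancing of v. (i) If v is not terminal, then no pruning occurs in forming γ̃; the direct descendants of v in γ̃ are exactly the direct descendants of v in γ together with the direct descendants of v̄ in γ other than v; v is the branch vertex of γ̃; and br(γ̃) = br(γ) + c − 1, where c is the number of direct descendants of v in γ. (ii) If v is terminal, then γ̃ is the path tree consisting of the path from the root o to v in γ, whose terminal vertex v carries weight equal to the total weight of γ. -/

import Mathlib

open scoped Classical

noncomputable section

/-- A (pre-)tree: a finite set of natural-number labelled vertices, a root,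
a parent function and a weight function.  Well-formedness is the predicate
`IsTree` below. -/
structure PreTree where
  verts : Finset ℕ
  root : ℕ
  parent : ℕ → ℕ
  wt : ℕ → ℕ

namespace PreTree

/-- `t.Anc u v` means `u ⪯ v` : `u` lies on the (parent-)path from the root to `v`. -/
def Anc (t : PreTree) (u v : ℕ) : Prop := ∃ n : ℕ, t.parent^[n] v = u

/-- strict ancestor `u ≺ v`. -/
def SAnc (t : PreTree) (u v : ℕ) : Prop := t.Anc u v ∧ u ≠ v

/-- `t` is an honest finite rooted tree: the root is a vertex, vertices are closed
under `parent`, the root is a fixed point of `parent`, and every vertex descends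
from the root. -/
def IsTree (t : PreTree) : Prop :=
  t.root ∈ t.verts ∧ (∀ v ∈ t.verts, t.parent v ∈ t.verts) ∧
    t.parent t.root = t.root ∧ ∀ v ∈ t.verts, t.Anc t.root v

/-- The direct descendants (children) of a vertex. -/
def children (t : PreTree) (u : ℕ) : Finset ℕ :=
  t.verts.filter fun x => t.parent x = u ∧ x ≠ u

/-- A vertex is terminal iff it has no (direct) descendants. -/
def Terminal (t : PreTree) (v : ℕ) : Prop := t.children v = ∅

/-- Terminally weighted: a vertex has positive weight iff it is terminal. -/
def TerminallyWeighted (t : PreTree) : Prop :=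
  ∀ v ∈ t.verts, (0 < t.wt v ↔ t.children v = ∅)

/-- The total weight of a weighted tree. -/
def totalWeight (t : PreTree) : ℕ := ∑ v ∈ t.verts, t.wt v

/-- Stable: every ghost non-root vertex has at least three edges attached to it,
i.e. at least two children. -/
def Stable (t : PreTree) : Prop :=
  ∀ v ∈ t.verts, v ≠ t.root → t.wt v = 0 → 2 ≤ (t.children v).card

/-- Semistable: every ghost non-root vertex has at least two edges attached to it,
i.e. at least one child. -/
def Semistable (t : PreTree) : Prop :=
  ∀ v ∈ t.verts, v ≠ t.root → t.wt v = 0 → 1 ≤ (t.children v).card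

/-- `b` is the last vertex `v_r` of the trunk: every strict ancestor of `b` has
exactly one child while `b` does not. -/
def IsTrunkEnd (t : PreTree) (b : ℕ) : Prop :=
  b ∈ t.verts ∧ (t.children b).card ≠ 1 ∧ ∀ p, t.SAnc p b → (t.children p).card = 1

/-- The number of branches: the number of children of the trunk end (`0` for a
path tree).  For an honest tree the trunk end is unique, so the sum below has at
most one nonzero term. -/
def br (t : PreTree) : ℕ :=
  ∑ b ∈ t.verts.filter (fun b => t.IsTrunkEnd b), (t.children b).card

/-- `b` is the branch vertex: the trunk end, provided it has at least two children. -/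
def IsBranchVertex (t : PreTree) (b : ℕ) : Prop :=
  t.IsTrunkEnd b ∧ 2 ≤ (t.children b).card

/-- The subtree of `t` rooted at `v` (with the inherited weights). -/
def subtreeAt (t : PreTree) (v : ℕ) : PreTree where
  verts := t.verts.filter fun u => t.Anc v u
  root := v
  parent := fun u => if u = v then v else t.parent u
  wt := t.wt

/-- Simple: every branch (subtree rooted at a child of the branch vertex) is stable. -/
def Simple (t : PreTree) : Prop :=
  ∀ b, t.IsTrunkEnd b → ∀ c ∈ t.children b, (t.subtreeAt c).Stable

/-- Pruning `t` from `v`: delete all strict descendants of `v` and add their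
weights to the weight of `v`. -/
def prune (t : PreTree) (v : ℕ) : PreTree where
  verts := t.verts.filter fun u => ¬ t.SAnc v u
  root := t.root
  parent := t.parent
  wt := fun u =>
    if u = v then t.wt v + ∑ x ∈ t.verts.filter (fun x => t.SAnc v x), t.wt x
    else t.wt u

/-- Normalization: repeatedly prune from positively weighted non-terminal vertices
until every positive vertex is terminal.  In closed form: keep exactly the vertices
with no positively weighted strict ancestor; a kept ghost vertex keeps weight `0`,
while a kept positive vertex absorbs the weights of all of its descendants. -/
def normalize (t : PreTree) : PreTree where
  verts := t.verts.filter fun u => ∀ p, t.SAnc p u → t.wt p = 0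
  root := t.root
  parent := t.parent
  wt := fun u =>
    if t.wt u = 0 then 0 else ∑ x ∈ t.verts.filter (fun x => t.Anc u x), t.wt x

/-- Collapsing a (non-root) vertex `v`: merge `v` into its direct ascendant (the
merged vertex carries the sum of the two weights, the children of `v` become
children of the merged vertex), then normalize. -/
def collapse (t : PreTree) (v : ℕ) : PreTree :=
  normalize
    { verts := t.verts.erase v
      root := t.root
      parent := fun u => if t.parent u = v then t.parent v else t.parent u
      wt := fun u => if u = t.parent v then t.wt (t.parent v) + t.wt v else t.wt u }

/-- Advancing a (non-root) vertex `v`: every direct descendant `u ≠ v` of the direct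
ascendant of `v` is re-attached to `v`, then normalize. -/
def advance (t : PreTree) (v : ℕ) : PreTree :=
  normalize
    { verts := t.verts
      root := t.root
      parent := fun u =>
        if t.parent u = t.parent v ∧ u ≠ t.parent v ∧ u ≠ v then v else t.parent u
      wt := t.wt }

/-- The monoidal transforms of `t`: the advancings of the direct descendants of the
branch vertex. -/
def Mon (t : PreTree) : Set PreTree :=
  {s | ∃ b v, t.IsBranchVertex b ∧ v ∈ t.children b ∧ s = t.advance v}

/-- Isomorphism of weighted rooted trees. -/
def Iso (s t : PreTree) : Prop :=
  ∃ f : ℕ → ℕ, Set.BijOn f (s.verts : Set ℕ) (t.verts : Set ℕ) ∧ f s.root = t.root ∧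
    (∀ v ∈ s.verts, f (s.parent v) = t.parent (f v)) ∧
    ∀ v ∈ s.verts, t.wt (f v) = s.wt v

/-- `Λ_d`: stable terminally weighted rooted trees of total weight `d`. -/
def Lambda (d : ℕ) : Set PreTree :=
  {t | t.IsTree ∧ t.Stable ∧ t.TerminallyWeighted ∧ t.totalWeight = d}

/-- `Λ_{d,[k]}`, defined inductively: `Λ_{d,[1]} = Λ_d` and for `k ≥ 2`,
`Λ_{d,[k]} = {γ ∈ Λ_{d,[k−1]} : br γ ≥ k+1} ∪ {γ ∈ Mon γ' : γ' ∈ Λ_{d,[k−1]}, br γ' = k}`. -/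
def LambdaK (d : ℕ) : ℕ → Set PreTree
  | 0 => Lambda d
  | 1 => Lambda d
  | k + 2 =>
      {t | t ∈ LambdaK d (k + 1) ∧ k + 3 ≤ t.br} ∪
        {t | ∃ t' ∈ LambdaK d (k + 1), t'.br = k + 2 ∧ t ∈ t'.Mon}

/-- Condition (†): every non-terminal direct descendant of the branch vertex has at
least two direct descendants. -/
def Dagger (t : PreTree) : Prop :=
  ∀ b v, t.IsBranchVertex b → v ∈ t.children b → t.children v ≠ ∅ →
    2 ≤ (t.children v).card

/-- `z_{[b,o]} = ∏_{b ⪰ a ≻ o} z_a`, the product of the variables `z_a` over all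
non-root vertices `a` on the path from the root to `b` (including `a = b`).
The variable `z_a` is `X (Sum.inl a)`; the variable `w_b` is `X (Sum.inr b)`. -/
def zpath (R : Type) [CommRing R] (t : PreTree) (b : ℕ) : MvPolynomial (ℕ ⊕ ℕ) R :=
  ∏ a ∈ t.verts.filter (fun a => t.Anc a b ∧ a ≠ t.root), MvPolynomial.X (Sum.inl a)

/-- `Φ_γ = ∑_{b terminal} z_{[b,o]} · w_b`. -/
def Phi (R : Type) [CommRing R] (t : PreTree) : MvPolynomial (ℕ ⊕ ℕ) R :=
  ∑ b ∈ t.verts.filter (fun b => t.children b = ∅),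
    zpath R t b * MvPolynomial.X (Sum.inr b)

end PreTree

/-!
Advancing `v` first re-hangs the siblings of `v` below `v` (`regraft`) and then normalizes.
Regrafting changes parents only of siblings of `v`, so ancestry above the branch vertex `b`
is untouched, and in the regrafted tree the root-to-`v` path is the old trunk followed by
`b ≺ v`, where `b` now has the single child `v`. Normalization keeps every ancestor of a kept
vertex, and removes exactly the strict descendants of positive vertices. If `v` is not terminal
it is a ghost and every positive vertex stays terminal, so nothing is pruned. If `v` is terminal
it is positive, and every vertex off the root-to-`v` path has become a descendant of `v`; the
weight of those vertices is all of the weight, since the trunk consists of ghosts.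
-/

namespace PreTree

section Ancestry

variable {t : PreTree} {b u w x y : ℕ}

theorem mem_children : x ∈ t.children u ↔ x ∈ t.verts ∧ t.parent x = u ∧ x ≠ u :=
  Finset.mem_filter

theorem disjoint_children (h : u ≠ w) : Disjoint (t.children u) (t.children w) :=
  Finset.disjoint_left.2 fun _ hu hw =>
    h ((mem_children.1 hu).2.1.symm.trans (mem_children.1 hw).2.1)

theorem anc_refl (t : PreTree) (u : ℕ) : t.Anc u u := ⟨0, rfl⟩

theorem anc_parent (t : PreTree) (x : ℕ) : t.Anc (t.parent x) x := ⟨1, rfl⟩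

theorem anc_of_mem_children (h : x ∈ t.children u) : t.Anc u x :=
  (mem_children.1 h).2.1 ▸ anc_parent t x

theorem Anc.trans (h₁ : t.Anc u w) (h₂ : t.Anc w x) : t.Anc u x := by
  obtain ⟨n, rfl⟩ := h₁
  obtain ⟨m, rfl⟩ := h₂
  exact ⟨n + m, Function.iterate_add_apply ..⟩

theorem Anc.anc_parent_of_ne (h : t.Anc u x) (hne : u ≠ x) : t.Anc u (t.parent x) := by
  obtain ⟨_ | n, rfl⟩ := h
  · exact absurd rfl hne
  · exact ⟨n, (Function.iterate_succ_apply ..).symm⟩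

theorem Anc.anc_of_mem_children (h : t.Anc u x) (hne : u ≠ x) (hx : x ∈ t.children b) :
    t.Anc u b :=
  (mem_children.1 hx).2.1 ▸ h.anc_parent_of_ne hne

theorem IsTree.iterate_mem (ht : t.IsTree) (hx : x ∈ t.verts) (n : ℕ) :
    t.parent^[n] x ∈ t.verts := by
  induction n with
  | zero => exact hx
  | succ n ih => rw [Function.iterate_succ_apply']; exact ht.2.1 _ ih

theorem Anc.mem (ht : t.IsTree) (h : t.Anc u x) (hx : x ∈ t.verts) : u ∈ t.verts := by
  obtain ⟨n, rfl⟩ := h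
  exact ht.iterate_mem hx n

theorem IsTree.mem_of_mem_children (ht : t.IsTree) (hx : x ∈ t.children u) : u ∈ t.verts :=
  (anc_of_mem_children hx).mem ht (mem_children.1 hx).1

theorem IsTree.eq_root_of_anc_root (ht : t.IsTree) (h : t.Anc u t.root) : u = t.root := by
  obtain ⟨n, rfl⟩ := h
  exact Function.iterate_fixed ht.2.2.1 n

/-- A cycle of the parent map can only pass through the root, which is why `Anc` is a
partial order on the vertices of a tree. -/
theorem Anc.antisymm (ht : t.IsTree) (h₁ : t.Anc u w) (h₂ : t.Anc w u) (hw : w ∈ t.verts) :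
    u = w := by
  obtain ⟨n, rfl⟩ := h₁
  obtain ⟨m, hm⟩ := h₂
  rcases Nat.eq_zero_or_pos (m + n) with hmn | hmn
  · rw [show n = 0 by omega]; rfl
  have hper : Function.IsPeriodicPt t.parent (m + n) w := by
    rw [Function.IsPeriodicPt, Function.IsFixedPt, Function.iterate_add_apply, hm]
  obtain ⟨k, hk⟩ := ht.2.2.2 w hw
  have hroot : w = t.root := by
    have hcyc := (hper.mul_const k).eq
    rw [← Nat.sub_add_cancel (Nat.le_mul_of_pos_left k hmn), Function.iterate_add_apply, hk,
      Function.iterate_fixed ht.2.2.1] at hcyc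
    exact hcyc.symm
  rw [hroot, Function.iterate_fixed ht.2.2.1]

theorem IsTree.not_anc_of_mem_children (ht : t.IsTree) (hy : y ∈ t.children b) :
    ¬ t.Anc y b := fun h =>
  (mem_children.1 hy).2.2 (h.antisymm ht (anc_of_mem_children hy) (ht.mem_of_mem_children hy))

theorem IsTree.eq_of_anc_of_mem_children (ht : t.IsTree) (hy : y ∈ t.children b)
    (hx : x ∈ t.children b) (h : t.Anc y x) : y = x := by
  by_contra hne
  exact ht.not_anc_of_mem_children hy (h.anc_of_mem_children hne hx)

theorem IsTree.exists_mem_children_anc (ht : t.IsTree) (h : t.Anc u x) (hne : u ≠ x)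
    (hx : x ∈ t.verts) : ∃ y ∈ t.children u, t.Anc y x := by
  obtain ⟨n, rfl⟩ := h
  induction n generalizing x with
  | zero => exact absurd rfl hne
  | succ n ih =>
    rw [Function.iterate_succ_apply] at hne ⊢
    by_cases hpx : t.parent x = t.parent^[n] (t.parent x)
    · exact ⟨x, mem_children.2 ⟨hx, hpx, hne.symm⟩, anc_refl t x⟩
    · obtain ⟨y, hy, hyx⟩ := ih (ht.2.1 x hx) (Ne.symm hpx)
      exact ⟨y, hy, hyx.trans (anc_parent t x)⟩

end Ancestry

section Trunk

variable {t : PreTree} {b b' u : ℕ}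

/-- Every vertex is comparable with the trunk end, since the trunk has no side branches. -/
theorem IsTrunkEnd.anc_or_anc (ht : t.IsTree) (hb : t.IsTrunkEnd b) (hu : u ∈ t.verts) :
    t.Anc u b ∨ t.Anc b u := by
  obtain ⟨n, hn⟩ := ht.2.2.2 u hu
  induction n generalizing u with
  | zero =>
    rw [show u = t.root from hn]
    exact Or.inl (ht.2.2.2 b hb.1)
  | succ n ih =>
    rw [Function.iterate_succ_apply] at hn
    rcases ih (ht.2.1 u hu) hn with h | h
    · by_cases hpb : t.parent u = b
      · exact Or.inr (hpb ▸ anc_parent t u)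
      by_cases hup : u = t.parent u
      · rw [← hup] at h
        exact Or.inl h
      obtain ⟨y, hy, hyb⟩ := ht.exists_mem_children_anc h hpb hb.1
      have hu' : u ∈ t.children (t.parent u) := mem_children.2 ⟨hu, rfl, hup⟩
      have huy := Finset.card_le_one.1 (hb.2.2 _ ⟨h, hpb⟩).le u hu' y hy
      exact Or.inl (huy ▸ hyb)
    · exact Or.inr (h.trans (anc_parent t u))

theorem IsTrunkEnd.eq (ht : t.IsTree) (hb : t.IsTrunkEnd b) (hb' : t.IsTrunkEnd b') :
    b = b' := by
  by_contra hne
  rcases hb.anc_or_anc ht hb'.1 with h | h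
  · exact hb'.2.1 (hb.2.2 b' ⟨h, Ne.symm hne⟩)
  · exact hb.2.1 (hb'.2.2 b ⟨h, hne⟩)

theorem IsTrunkEnd.br_eq (hb : t.IsTrunkEnd b) (ht : t.IsTree) :
    t.br = (t.children b).card := by
  have hends : t.verts.filter (fun x => t.IsTrunkEnd x) = {b} := by
    ext x
    simp only [Finset.mem_filter, Finset.mem_singleton]
    exact ⟨fun hx => hx.2.eq ht hb, fun hx => hx ▸ ⟨hb.1, hb⟩⟩
  rw [br, hends, Finset.sum_singleton]

theorem wt_eq_zero_of_anc_branchVertex (ht : t.IsTree) (htw : t.TerminallyWeighted)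
    (hb : t.IsBranchVertex b) (hu : t.Anc u b) : t.wt u = 0 := by
  have hne : (t.children u).Nonempty := by
    rcases eq_or_ne u b with rfl | hub
    · exact Finset.card_pos.1 (by have := hb.2; omega)
    · exact Finset.card_pos.1 (by rw [hb.1.2.2 u ⟨hu, hub⟩]; norm_num)
  by_contra h
  exact hne.ne_empty ((htw u (hu.mem ht hb.1.1)).1 (Nat.pos_of_ne_zero h))

end Trunk

section Normalize

variable {s : PreTree} {p u x : ℕ}

theorem mem_normalize_verts :
    u ∈ s.normalize.verts ↔ u ∈ s.verts ∧ ∀ p, s.SAnc p u → s.wt p = 0 :=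
  Finset.mem_filter

theorem IsTree.mem_normalize_verts_of_anc (hs : s.IsTree) (hx : x ∈ s.normalize.verts)
    (hu : s.Anc u x) : u ∈ s.normalize.verts := by
  obtain ⟨hxs, hx0⟩ := mem_normalize_verts.1 hx
  have hus := hu.mem hs hxs
  refine mem_normalize_verts.2 ⟨hus, fun p hp => hx0 p ⟨hp.1.trans hu, ?_⟩⟩
  rintro rfl
  exact hp.2 (hp.1.antisymm hs hu hus)

theorem IsTree.normalize (hs : s.IsTree) : s.normalize.IsTree := by
  have hroot : s.root ∈ s.normalize.verts :=
    mem_normalize_verts.2 ⟨hs.1, fun p hp => absurd (hs.eq_root_of_anc_root hp.1) hp.2⟩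
  exact ⟨hroot, fun u hu => hs.mem_normalize_verts_of_anc hu (anc_parent s u), hs.2.2.1,
    fun u hu => hs.2.2.2 u (mem_normalize_verts.1 hu).1⟩

theorem normalize_children_eq_empty_of_wt_pos (h : 0 < s.wt u) : s.normalize.children u = ∅ :=
  Finset.eq_empty_of_forall_notMem fun x hx => by
    obtain ⟨hxv, hxu, hne⟩ := mem_children.1 hx
    exact h.ne' ((mem_normalize_verts.1 hxv).2 u ⟨⟨1, hxu⟩, hne.symm⟩)

theorem IsTree.normalize_verts_eq (hs : s.IsTree)
    (h : ∀ u ∈ s.verts, 0 < s.wt u → s.children u = ∅) : s.normalize.verts = s.verts :=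
  Finset.filter_true_of_mem fun u hu p hp => by
    by_contra hw
    obtain ⟨y, hy, -⟩ := hs.exists_mem_children_anc hp.1 hp.2 hu
    rw [h p (hp.1.mem hs hu) (Nat.pos_of_ne_zero hw)] at hy
    exact Finset.notMem_empty y hy

theorem IsTree.card_normalize_children_eq_one (hs : s.IsTree) (hx : x ∈ s.normalize.verts)
    (hp : s.SAnc p x) (h1 : (s.children p).card = 1) : (s.normalize.children p).card = 1 := by
  obtain ⟨y, hy, hyx⟩ := hs.exists_mem_children_anc hp.1 hp.2 (mem_normalize_verts.1 hx).1
  have hy' : y ∈ s.normalize.children p :=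
    mem_children.2 ⟨hs.mem_normalize_verts_of_anc hx hyx, (mem_children.1 hy).2⟩
  have hsub : s.normalize.children p ⊆ s.children p := fun z hz =>
    mem_children.2 ⟨(mem_normalize_verts.1 (mem_children.1 hz).1).1, (mem_children.1 hz).2⟩
  exact le_antisymm (h1 ▸ Finset.card_le_card hsub) (Finset.card_pos.2 ⟨y, hy'⟩)

end Normalize

section ParentChange

variable {s t : PreTree} {a u : ℕ}

theorem anc_iff_of_parent_eq (h : ∀ x, t.Anc x u → s.parent x = t.parent x) :
    s.Anc a u ↔ t.Anc a u := by
  have hiter : ∀ n, s.parent^[n] u = t.parent^[n] u := by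
    intro n
    induction n with
    | zero => rfl
    | succ n ih =>
      rw [Function.iterate_succ_apply', Function.iterate_succ_apply', ih, h _ ⟨n, rfl⟩]
  simp only [Anc, hiter]

theorem Anc.of_parent_eq (h : ∀ x, t.Anc x u → t.SAnc a x → s.parent x = t.parent x)
    (hu : t.Anc a u) : s.Anc a u := by
  obtain ⟨n, rfl⟩ := hu
  induction n generalizing u with
  | zero => exact anc_refl s u
  | succ n ih =>
    by_cases hau : t.parent^[n + 1] u = u
    · rw [hau]; exact anc_refl s u
    have hpu := h u (anc_refl t u) ⟨⟨n + 1, rfl⟩, hau⟩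
    rw [Function.iterate_succ_apply] at hau ⊢
    have hanc := ih fun x hx hax => h x (hx.trans (anc_parent t u)) hax
    refine hanc.trans ?_
    rw [← hpu]
    exact anc_parent s u

end ParentChange

def regraft (t : PreTree) (v : ℕ) : PreTree where
  verts := t.verts
  root := t.root
  parent u := if t.parent u = t.parent v ∧ u ≠ t.parent v ∧ u ≠ v then v else t.parent u
  wt := t.wt

section Regraft

variable {t : PreTree} {b p u v x y : ℕ}

@[simp]
theorem regraft_verts : (t.regraft v).verts = t.verts := rfl

theorem regraft_parent_of_mem (hv : v ∈ t.children b) (hx : x ∈ (t.children b).erase v) :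
    (t.regraft v).parent x = v := by
  obtain ⟨hxv, hx⟩ := Finset.mem_erase.1 hx
  have hvb := (mem_children.1 hv).2.1
  obtain ⟨-, hxb, hxb'⟩ := mem_children.1 hx
  exact if_pos ⟨hxb.trans hvb.symm, hvb ▸ hxb', hxv⟩

theorem regraft_parent_of_not_mem (hv : v ∈ t.children b) (hx : x ∈ t.verts)
    (hxb : x ∉ (t.children b).erase v) : (t.regraft v).parent x = t.parent x := by
  have hvb := (mem_children.1 hv).2.1
  refine if_neg fun hc => hxb (Finset.mem_erase.2 ⟨hc.2.2, mem_children.2 ⟨hx, ?_, ?_⟩⟩)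
  · exact hc.1.trans hvb
  · exact hvb ▸ hc.2.1

theorem regraft_parent_self (hv : v ∈ t.children b) : (t.regraft v).parent v = b :=
  (regraft_parent_of_not_mem hv (mem_children.1 hv).1 (Finset.notMem_erase v _)).trans
    (mem_children.1 hv).2.1

theorem mem_regraft_children (hv : v ∈ t.children b) :
    x ∈ (t.regraft v).children p ↔
      x ∈ (t.children b).erase v ∧ p = v ∨ x ∉ (t.children b).erase v ∧ x ∈ t.children p := by
  by_cases hx : x ∈ (t.children b).erase v
  · have hxv := (Finset.mem_erase.1 hx).1
    simp only [mem_children, regraft_verts, regraft_parent_of_mem hv hx, hx, true_and,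
      not_true_eq_false, false_and, or_false]
    exact ⟨fun h => h.2.1.symm, fun h => ⟨(mem_children.1 (Finset.mem_of_mem_erase hx)).1,
      h.symm, h ▸ hxv⟩⟩
  · simp only [hx, false_and, not_false_eq_true, true_and, false_or]
    constructor
    · intro h
      obtain ⟨hxt, hxp, hne⟩ := mem_children.1 h
      exact mem_children.2 ⟨hxt, regraft_parent_of_not_mem hv hxt hx ▸ hxp, hne⟩
    · intro h
      obtain ⟨hxt, hxp, hne⟩ := mem_children.1 h
      exact mem_children.2 ⟨hxt, (regraft_parent_of_not_mem hv hxt hx).trans hxp, hne⟩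

theorem regraft_children_self (hv : v ∈ t.children b) :
    (t.regraft v).children v = t.children v ∪ (t.children b).erase v := by
  ext x
  rw [mem_regraft_children hv, Finset.mem_union]
  tauto

theorem regraft_children_subset (hv : v ∈ t.children b) (hpv : p ≠ v) :
    (t.regraft v).children p ⊆ t.children p := fun x hx => by
  rcases (mem_regraft_children hv).1 hx with h | h
  · exact absurd h.2 hpv
  · exact h.2

theorem regraft_children_branch (hv : v ∈ t.children b) : (t.regraft v).children b = {v} := by
  have hbv : b ≠ v := (mem_children.1 hv).2.2.symm
  ext x
  rw [mem_regraft_children hv, Finset.mem_singleton, Finset.mem_erase]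
  constructor
  · rintro (h | ⟨h, hx⟩)
    · exact absurd h.2 hbv
    · by_contra hxv
      exact h ⟨hxv, hx⟩
  · rintro rfl
    exact Or.inr ⟨fun h => h.1 rfl, hv⟩

theorem regraft_anc_iff (ht : t.IsTree) (hv : v ∈ t.children b) (hu : t.Anc u b) :
    (t.regraft v).Anc p u ↔ t.Anc p u :=
  anc_iff_of_parent_eq fun _ hx =>
    regraft_parent_of_not_mem hv (hx.mem ht (hu.mem ht (ht.mem_of_mem_children hv))) fun hmem =>
      ht.not_anc_of_mem_children (Finset.mem_of_mem_erase hmem) (hx.trans hu)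

theorem regraft_sAnc_self_iff (ht : t.IsTree) (hv : v ∈ t.children b) :
    (t.regraft v).SAnc p v ↔ t.Anc p b := by
  constructor
  · rintro ⟨h, hne⟩
    have h' := h.anc_parent_of_ne hne
    rwa [regraft_parent_self hv, regraft_anc_iff ht hv (anc_refl t b)] at h'
  · intro h
    refine ⟨((regraft_anc_iff ht hv (anc_refl t b)).2 h).trans ?_, ?_⟩
    · exact regraft_parent_self hv ▸ anc_parent _ v
    · rintro rfl
      exact ht.not_anc_of_mem_children hv h

theorem regraft_anc_self_of_anc (ht : t.IsTree) (hv : v ∈ t.children b) (hu : t.Anc u v) :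
    (t.regraft v).Anc u v := by
  rcases eq_or_ne u v with rfl | hne
  · exact anc_refl _ u
  · exact ((regraft_sAnc_self_iff ht hv).2 (hu.anc_of_mem_children hne hv)).1

theorem regraft_anc_of_anc_of_mem_children (ht : t.IsTree) (hv : v ∈ t.children b)
    (hy : y ∈ t.children b) (hyu : t.Anc y u) (hu : u ∈ t.verts) : (t.regraft v).Anc v u := by
  have hvy : (t.regraft v).Anc v y := by
    rcases eq_or_ne y v with rfl | hyv
    · exact anc_refl _ y
    · exact ⟨1, regraft_parent_of_mem hv (Finset.mem_erase.2 ⟨hyv, hy⟩)⟩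
  refine hvy.trans (hyu.of_parent_eq fun x hx hyx => ?_)
  refine regraft_parent_of_not_mem hv (hx.mem ht hu) fun hmem => hyx.2 ?_
  exact ht.eq_of_anc_of_mem_children hy (Finset.mem_of_mem_erase hmem) hyx.1

theorem anc_or_regraft_anc (ht : t.IsTree) (hb : t.IsTrunkEnd b) (hv : v ∈ t.children b)
    (hu : u ∈ t.verts) : t.Anc u v ∨ (t.regraft v).Anc v u := by
  rcases hb.anc_or_anc ht hu with h | h
  · exact Or.inl (h.trans (anc_of_mem_children hv))
  rcases eq_or_ne b u with rfl | hbu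
  · exact Or.inl (anc_of_mem_children hv)
  obtain ⟨y, hy, hyu⟩ := ht.exists_mem_children_anc h hbu hu
  exact Or.inr (regraft_anc_of_anc_of_mem_children ht hv hy hyu hu)

theorem regraft_isTree (ht : t.IsTree) (hv : v ∈ t.children b) : (t.regraft v).IsTree := by
  have hroot : t.root ∉ (t.children b).erase v := fun h =>
    ht.not_anc_of_mem_children (Finset.mem_of_mem_erase h)
      (ht.2.2.2 b (ht.mem_of_mem_children hv))
  have hrv : (t.regraft v).Anc t.root v :=
    ((regraft_sAnc_self_iff ht hv).2 (ht.2.2.2 b (ht.mem_of_mem_children hv))).1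
  refine ⟨ht.1, fun u hu => ?_, (regraft_parent_of_not_mem hv ht.1 hroot).trans ht.2.2.1,
    fun u hu => ?_⟩
  · by_cases hmem : u ∈ (t.children b).erase v
    · rw [regraft_parent_of_mem hv hmem]
      exact (mem_children.1 hv).1
    · rw [regraft_parent_of_not_mem hv hu hmem]
      exact ht.2.1 u hu
  · by_cases hy : ∃ y ∈ t.children b, t.Anc y u
    · obtain ⟨y, hy, hyu⟩ := hy
      exact hrv.trans (regraft_anc_of_anc_of_mem_children ht hv hy hyu hu)
    · refine (ht.2.2.2 u hu).of_parent_eq fun x hx _ => ?_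
      refine regraft_parent_of_not_mem hv (hx.mem ht hu) fun hmem => hy ?_
      exact ⟨x, Finset.mem_of_mem_erase hmem, hx⟩

theorem card_regraft_children_eq_one (ht : t.IsTree) (hb : t.IsTrunkEnd b)
    (hv : v ∈ t.children b) (hp : (t.regraft v).SAnc p v) :
    ((t.regraft v).children p).card = 1 := by
  have hpb := (regraft_sAnc_self_iff ht hv).1 hp
  rcases eq_or_ne p b with rfl | hne
  · rw [regraft_children_branch hv, Finset.card_singleton]
  obtain ⟨y, hy, -⟩ := (regraft_isTree ht hv).exists_mem_children_anc hp.1 hp.2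
    (mem_children.1 hv).1
  refine le_antisymm ?_ (Finset.card_pos.2 ⟨y, hy⟩)
  rw [← hb.2.2 p ⟨hpb, hne⟩]
  exact Finset.card_le_card (regraft_children_subset hv hp.2)

end Regraft

section Advance

variable {t : PreTree} {b u v : ℕ}

theorem advance_isTree (ht : t.IsTree) (hv : v ∈ t.children b) : (t.advance v).IsTree :=
  (regraft_isTree ht hv).normalize

theorem mem_advance_verts_self (ht : t.IsTree) (htw : t.TerminallyWeighted)
    (hb : t.IsBranchVertex b) (hv : v ∈ t.children b) : v ∈ (t.advance v).verts :=
  mem_normalize_verts.2 ⟨(mem_children.1 hv).1, fun p hp => show t.wt p = 0 from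
    wt_eq_zero_of_anc_branchVertex ht htw hb ((regraft_sAnc_self_iff ht hv).1 hp)⟩

theorem advance_isTrunkEnd (ht : t.IsTree) (htw : t.TerminallyWeighted)
    (hb : t.IsBranchVertex b) (hv : v ∈ t.children b)
    (hcard : ((t.advance v).children v).card ≠ 1) : (t.advance v).IsTrunkEnd v :=
  ⟨mem_advance_verts_self ht htw hb hv, hcard, fun _ hp =>
    (regraft_isTree ht hv).card_normalize_children_eq_one (mem_advance_verts_self ht htw hb hv)
      hp (card_regraft_children_eq_one ht hb.1 hv hp)⟩

theorem advance_verts_of_ne_empty (ht : t.IsTree) (htw : t.TerminallyWeighted)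
    (hv : v ∈ t.children b) (hne : t.children v ≠ ∅) : (t.advance v).verts = t.verts := by
  refine (regraft_isTree ht hv).normalize_verts_eq fun p hp hwp => ?_
  have hterm : t.children p = ∅ := (htw p hp).1 hwp
  have hpv : p ≠ v := by
    rintro rfl
    exact hne hterm
  exact Finset.subset_empty.1 (hterm ▸ regraft_children_subset hv hpv)

theorem advance_children_self_of_ne_empty (ht : t.IsTree) (htw : t.TerminallyWeighted)
    (hv : v ∈ t.children b) (hne : t.children v ≠ ∅) :
    (t.advance v).children v = t.children v ∪ (t.children b).erase v := by
  rw [children, advance_verts_of_ne_empty ht htw hv hne]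
  exact regraft_children_self hv

theorem advance_children_self_of_eq_empty (htw : t.TerminallyWeighted)
    (hv : v ∈ t.children b) (hterm : t.children v = ∅) : (t.advance v).children v = ∅ :=
  normalize_children_eq_empty_of_wt_pos ((htw v (mem_children.1 hv).1).2 hterm)

theorem advance_verts_of_eq_empty (ht : t.IsTree) (htw : t.TerminallyWeighted)
    (hb : t.IsBranchVertex b) (hv : v ∈ t.children b) (hterm : t.children v = ∅) :
    (t.advance v).verts = t.verts.filter (fun u => t.Anc u v) := by
  have hwv : 0 < t.wt v := (htw v (mem_children.1 hv).1).2 hterm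
  ext u
  rw [Finset.mem_filter]
  constructor
  · intro hu
    obtain ⟨hut, hu0⟩ := mem_normalize_verts.1 hu
    refine ⟨hut, ?_⟩
    by_contra huv
    have hvu := (anc_or_regraft_anc ht hb.1 hv hut).resolve_left huv
    have hne : v ≠ u := by
      rintro rfl
      exact huv (anc_refl t v)
    exact hwv.ne' (hu0 v ⟨hvu, hne⟩)
  · rintro ⟨-, hu⟩
    exact (regraft_isTree ht hv).mem_normalize_verts_of_anc (mem_advance_verts_self ht htw hb hv)
      (regraft_anc_self_of_anc ht hv hu)

theorem advance_wt_self_of_eq_empty (ht : t.IsTree) (htw : t.TerminallyWeighted)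
    (hb : t.IsBranchVertex b) (hv : v ∈ t.children b) (hterm : t.children v = ∅) :
    (t.advance v).wt v = t.totalWeight := by
  have hwv : 0 < t.wt v := (htw v (mem_children.1 hv).1).2 hterm
  show (if t.wt v = 0 then 0
    else ∑ x ∈ t.verts.filter (fun x => (t.regraft v).Anc v x), t.wt x) = t.totalWeight
  rw [if_neg hwv.ne', totalWeight]
  refine Finset.sum_subset (Finset.filter_subset _ _) fun u hu hvu => ?_
  have hvu : ¬ (t.regraft v).Anc v u := fun h => hvu (Finset.mem_filter.2 ⟨hu, h⟩)
  have huv : u ≠ v := by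
    rintro rfl
    exact hvu (anc_refl _ u)
  have hanc := (anc_or_regraft_anc ht hb.1 hv hu).resolve_right hvu
  exact wt_eq_zero_of_anc_branchVertex ht htw hb (hanc.anc_of_mem_children huv hv)

end Advance

end PreTree

open PreTree in
theorem advance_structure_general (t : PreTree) (b v : ℕ)
    (ht : t.IsTree) (htw : t.TerminallyWeighted)
    (hb : t.IsBranchVertex b) (hv : v ∈ t.children b) :
    (t.children v ≠ ∅ →
      (t.advance v).verts = t.verts ∧
      (t.advance v).children v = t.children v ∪ (t.children b).erase v ∧
      (t.advance v).IsBranchVertex v ∧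
      (t.advance v).br + 1 = t.br + (t.children v).card) ∧
    (t.children v = ∅ →
      (t.advance v).verts = t.verts.filter (fun u => t.Anc u v) ∧
      (t.advance v).br = 0 ∧
      (t.advance v).wt v = t.totalWeight) := by
  have hbr : t.br = (t.children b).card := hb.1.br_eq ht
  have hb2 : 2 ≤ (t.children b).card := hb.2
  refine ⟨fun hne => ?_, fun hterm => ?_⟩
  · have hchildren := advance_children_self_of_ne_empty ht htw hv hne
    have hv1 : 1 ≤ (t.children v).card := Finset.card_pos.2 (Finset.nonempty_iff_ne_empty.2 hne)
    have hcard : ((t.advance v).children v).card + 1 =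
        (t.children v).card + (t.children b).card := by
      rw [hchildren, Finset.card_union_of_disjoint
        ((disjoint_children (mem_children.1 hv).2.2).mono_right (Finset.erase_subset _ _)),
        Finset.card_erase_of_mem hv]
      omega
    have hend := advance_isTrunkEnd ht htw hb hv (by omega)
    refine ⟨advance_verts_of_ne_empty ht htw hv hne, hchildren, ⟨hend, by omega⟩, ?_⟩
    rw [hend.br_eq (advance_isTree ht hv)]
    omega
  · have hchildren := advance_children_self_of_eq_empty htw hv hterm
    have hend := advance_isTrunkEnd ht htw hb hv (by simp [hchildren])
    refine ⟨advance_verts_of_eq_empty ht htw hb hv hterm, ?_,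
      advance_wt_self_of_eq_empty ht htw hb hv hterm⟩
    rw [hend.br_eq (advance_isTree ht hv), hchildren, Finset.card_empty]

/-- structure of the advancing `γ̃` of a direct descendant `v` of the
branch vertex `b` of a simple terminally weighted rooted tree `γ`:
(i) if `v` is not terminal then no pruning occurs (the vertex set is unchanged),
the direct descendants of `v` in `γ̃` are those of `v` in `γ` together with those
of `b` other than `v`, `v` is the branch vertex of `γ̃`, and
`br γ̃ = br γ + c − 1` where `c` is the number of direct descendants of `v` in `γ`;
(ii) if `v` is terminal then `γ̃` is the path tree on the path from the root to `v`,
whose terminal vertex `v` carries the total weight of `γ`. -/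
theorem advance_structure (t : PreTree) (b v : ℕ)
    (ht : t.IsTree) (htw : t.TerminallyWeighted) (hs : t.Simple)
    (hb : t.IsBranchVertex b) (hv : v ∈ t.children b) :
    (t.children v ≠ ∅ →
      (t.advance v).verts = t.verts ∧
      (t.advance v).children v = t.children v ∪ (t.children b).erase v ∧
      (t.advance v).IsBranchVertex v ∧
      (t.advance v).br + 1 = t.br + (t.children v).card) ∧
    (t.children v = ∅ →
      (t.advance v).verts = t.verts.filter (fun u => t.Anc u v) ∧
      (t.advance v).br = 0 ∧
      (t.advance v).wt v = t.totalWeight) :=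
  advance_structure_general t b v ht htw hb hv
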